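/- If G is a well-covered graph and S is an independent set of G with |S| < α(G), then the localization G_S = G − N_G[S] is well-covered and α(G) = α(G_S) + |S|. -/

import Mathlib

open Classical

noncomputable section

variable {V : Type*}

/-- `s` is an independent set of `G`. -/
def IndepSet (G : SimpleGraph V) (s : Set V) : Prop :=
  ∀ ⦃a⦄, a ∈ s → ∀ ⦃b⦄, b ∈ s → ¬ G.Adj a b

/-- The independence number `α(G)`. -/
def alphaNum [Fintype V] (G : SimpleGraph V) : ℕ :=
  sSup {n | ∃ s : Set V, IndepSet G s ∧ s.ncard = n}

/-- `s` is a maximal independent set of `G`. -/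
def MaximalIndep (G : SimpleGraph V) (s : Set V) : Prop :=
  IndepSet G s ∧ ∀ t : Set V, IndepSet G t → s ⊆ t → s = t

/-- `G` is well-covered: all maximal independent sets have cardinality `α(G)`. -/
def WellCovered [Fintype V] (G : SimpleGraph V) : Prop :=
  ∀ s : Set V, MaximalIndep G s → s.ncard = alphaNum G

/-- The open neighborhood `N_G(S)` of a set of vertices. -/
def openNbhd (G : SimpleGraph V) (S : Set V) : Set V :=
  {v | v ∉ S ∧ ∃ u ∈ S, G.Adj u v}

/-- The closed neighborhood `N_G[S]`. -/
def closedNbhd (G : SimpleGraph V) (S : Set V) : Set V :=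
  S ∪ openNbhd G S

/-- The vertex set of the localization `G_S = G - N_G[S]`. -/
def localSet (G : SimpleGraph V) (S : Set V) : Set V :=
  (closedNbhd G S)ᶜ

/-- `G` belongs to the class `W_p`. -/
def Wp (p : ℕ) [Fintype V] (G : SimpleGraph V) : Prop :=
  p ≤ Fintype.card V ∧
    ∀ A : Fin p → Set V,
      (∀ i, IndepSet G (A i)) →
      (∀ i j, i ≠ j → Disjoint (A i) (A j)) →
      ∃ S : Fin p → Set V,
        (∀ i j, i ≠ j → Disjoint (S i) (S j)) ∧
        (∀ i, IndepSet G (S i) ∧ (S i).ncard = alphaNum G) ∧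
        (∀ i, A i ⊆ S i)

/-- `G` is `α`-critical: deleting any edge increases the independence number. -/
def AlphaCritical [Fintype V] (G : SimpleGraph V) : Prop :=
  ∀ a b : V, G.Adj a b → alphaNum G < alphaNum (G.deleteEdges {s(a, b)})

/-- The vertex set of `G_{ab} = G - (N_G(a) ∪ N_G(b))`. -/
def edgeLocalSet (G : SimpleGraph V) (a b : V) : Set V :=
  (G.neighborSet a ∪ G.neighborSet b)ᶜ

/-!
For an independent set `S`, adding `S` to a maximal independent set `T` of `G_S` gives a maximal
independent set of `G`: a vertex outside `S ∪ T` either lies in `N_G[S]` or in `G_S`, and is blocked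
by `S` or by `T` accordingly. Since `G` is well-covered, every maximal independent set of `G_S` thus
has exactly `α(G) - |S|` elements, which makes `G_S` well-covered with that independence number.
-/

lemma alphaNum_set_bddAbove [Fintype V] (G : SimpleGraph V) :
    BddAbove {n | ∃ s : Set V, IndepSet G s ∧ s.ncard = n} := by
  refine ⟨Fintype.card V, ?_⟩
  rintro n ⟨s, -, rfl⟩
  simpa [Set.ncard_univ] using Set.ncard_le_ncard (Set.subset_univ s)

lemma IndepSet.ncard_le_alphaNum [Fintype V] {G : SimpleGraph V} {s : Set V}
    (hs : IndepSet G s) : s.ncard ≤ alphaNum G :=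
  le_csSup (alphaNum_set_bddAbove G) ⟨s, hs, rfl⟩

lemma indepSet_empty (G : SimpleGraph V) : IndepSet G ∅ :=
  fun _ ha => ha.elim

lemma IndepSet.exists_maximalIndep_superset [Finite V] {G : SimpleGraph V} {s : Set V}
    (hs : IndepSet G s) : ∃ t, MaximalIndep G t ∧ s ⊆ t := by
  obtain ⟨t, ⟨ht, hst⟩, hmax⟩ := Set.Finite.exists_maximalFor Set.ncard
    {t : Set V | IndepSet G t ∧ s ⊆ t} (Set.toFinite _) ⟨s, hs, subset_rfl⟩
  refine ⟨t, ⟨ht, fun u hu htu => ?_⟩, hst⟩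
  by_contra hne
  have hlt : t.ncard < u.ncard := Set.ncard_lt_ncard (ssubset_of_subset_of_ne htu hne)
  exact hlt.not_ge (hmax ⟨hu, hst.trans htu⟩ hlt.le)

lemma alphaNum_eq_of_forall_maximalIndep_ncard_eq [Fintype V] {G : SimpleGraph V} {k : ℕ}
    (h : ∀ t, MaximalIndep G t → t.ncard = k) : alphaNum G = k := by
  obtain ⟨t₀, ht₀, -⟩ := (indepSet_empty G).exists_maximalIndep_superset
  refine le_antisymm (csSup_le ⟨0, ∅, indepSet_empty G, Set.ncard_empty V⟩ ?_) ?_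
  · rintro n ⟨s, hs, rfl⟩
    obtain ⟨t, ht, hst⟩ := hs.exists_maximalIndep_superset
    exact h t ht ▸ Set.ncard_le_ncard hst
  · exact h t₀ ht₀ ▸ ht₀.1.ncard_le_alphaNum

section Localization

variable {G : SimpleGraph V} {S : Set V}

lemma mem_localSet_iff {x : V} : x ∈ localSet G S ↔ x ∉ S ∧ ∀ s ∈ S, ¬ G.Adj s x := by
  simp only [localSet, closedNbhd, openNbhd, Set.mem_compl_iff, Set.mem_union,
    Set.mem_ofPred_eq, not_or, not_and, not_exists]
  exact ⟨fun ⟨hS, hN⟩ => ⟨hS, fun s hs => hN hS s hs⟩, fun ⟨hS, hN⟩ => ⟨hS, fun _ => hN⟩⟩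

lemma disjoint_image_val_localSet (T : Set (localSet G S)) :
    Disjoint S (Subtype.val '' T) :=
  Set.disjoint_right.2 fun _ ⟨y, _, hy⟩ => hy ▸ (mem_localSet_iff.1 y.2).1

lemma ncard_union_image_val_localSet [Finite V] (T : Set (localSet G S)) :
    (S ∪ Subtype.val '' T).ncard = S.ncard + T.ncard := by
  rw [Set.ncard_union_eq (disjoint_image_val_localSet T) (Set.toFinite _) (Set.toFinite _),
    Set.ncard_image_of_injective T Subtype.val_injective]

lemma IndepSet.union_image_val_localSet (hS : IndepSet G S) {T : Set (localSet G S)}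
    (hT : IndepSet (G.induce (localSet G S)) T) : IndepSet G (S ∪ Subtype.val '' T) := by
  rintro a (ha | ⟨a, ha', rfl⟩) b (hb | ⟨b, hb', rfl⟩) hadj
  · exact hS ha hb hadj
  · exact (mem_localSet_iff.1 b.2).2 a ha hadj
  · exact (mem_localSet_iff.1 a.2).2 b hb hadj.symm
  · exact hT ha' hb' hadj

lemma IndepSet.maximalIndep_union_image_val_localSet (hS : IndepSet G S)
    {T : Set (localSet G S)} (hT : MaximalIndep (G.induce (localSet G S)) T) :
    MaximalIndep G (S ∪ Subtype.val '' T) := by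
  refine ⟨hS.union_image_val_localSet hT.1, fun t ht hUt => ?_⟩
  refine hUt.antisymm fun x hx => by_contra fun hxU => ?_
  have hxL : x ∈ localSet G S := mem_localSet_iff.2
    ⟨fun hxS => hxU (Or.inl hxS), fun s hs => ht (hUt (Or.inl hs)) hx⟩
  have hins : IndepSet (G.induce (localSet G S)) (insert ⟨x, hxL⟩ T) := by
    have hmem : ∀ a ∈ insert ⟨x, hxL⟩ T, (a : V) ∈ t := by
      rintro a (rfl | ha)
      · exact hx
      · exact hUt (Or.inr ⟨a, ha, rfl⟩)
    exact fun a ha b hb => ht (hmem a ha) (hmem b hb)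
  have hxT : (⟨x, hxL⟩ : localSet G S) ∈ T :=
    (hT.2 _ hins (Set.subset_insert _ _)).symm ▸ Set.mem_insert _ _
  exact hxU (Or.inr ⟨_, hxT, rfl⟩)

end Localization

theorem stmt6_general [Fintype V] (G : SimpleGraph V) (S : Set V)
    (hwc : WellCovered G) (hS : IndepSet G S) :
    WellCovered (G.induce (localSet G S)) ∧
      alphaNum G = alphaNum (G.induce (localSet G S)) + S.ncard := by
  have hcard : ∀ T, MaximalIndep (G.induce (localSet G S)) T →
      T.ncard = alphaNum G - S.ncard := fun T hT => by
    have := hwc _ (hS.maximalIndep_union_image_val_localSet hT)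
    rw [ncard_union_image_val_localSet] at this
    omega
  have hα := alphaNum_eq_of_forall_maximalIndep_ncard_eq hcard
  refine ⟨fun T hT => (hcard T hT).trans hα.symm, ?_⟩
  have := hS.ncard_le_alphaNum
  omega

theorem stmt6 [Fintype V] (G : SimpleGraph V) (S : Set V)
    (hwc : WellCovered G) (hS : IndepSet G S) (hcard : S.ncard < alphaNum G) :
    WellCovered (G.induce (localSet G S)) ∧
      alphaNum G = alphaNum (G.induce (localSet G S)) + S.ncard :=
  stmt6_general G S hwc hS
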